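/- (Scaling lemma) Let C > 0, R = [[1, a₁],[a₂, 1]], S = [[1, C a₁],[a₂/C, 1]]. If (g, m) solves the Skorokhod problem for driving function f with matrix R, then (g̃, m̃) with g̃ = (g₁, g₂/C), m̃ = (m₁, m₂/C) solves the Skorokhod problem for driving function f̃ = (f₁, f₂/C) with matrix S. Consequently uniqueness of solutions for every continuous driving function holds for R if and only if it holds for S. -/
import Mathlib


open Set Matrix

/-- The Skorokhod problem on `[0,∞)` in the nonnegative quadrant of `ℝ²` with
reflection matrix `R` and driving function `f`: `(g, m)` is a solution. -/
def IsSkorokhod (R : Matrix (Fin 2) (Fin 2) ℝ) (f g m : ℝ → Fin 2 → ℝ) : Prop :=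
  ContinuousOn g (Set.Ici 0) ∧ ContinuousOn m (Set.Ici 0) ∧
  (∀ t ∈ Set.Ici (0:ℝ), ∀ j, 0 ≤ g t j) ∧
  m 0 = 0 ∧
  (∀ j, MonotoneOn (fun t => m t j) (Set.Ici 0)) ∧
  (∀ t ∈ Set.Ici (0:ℝ), g t = f t + R.mulVec (m t)) ∧
  (∀ j, ∀ s t, 0 ≤ s → s ≤ t → (∀ r ∈ Set.Icc s t, 0 < g r j) → m s j = m t j)

/-- Uniqueness of solutions of the Skorokhod problem with matrix `R`, for every
continuous driving function `f` with `f 0 ≥ 0`. -/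
def SkorokhodUnique (R : Matrix (Fin 2) (Fin 2) ℝ) : Prop :=
  ∀ f : ℝ → Fin 2 → ℝ, ContinuousOn f (Set.Ici 0) → (∀ j, 0 ≤ f 0 j) →
    ∀ g m g' m', IsSkorokhod R f g m → IsSkorokhod R f g' m' →
      ∀ t ∈ Set.Ici (0:ℝ), g t = g' t ∧ m t = m' t

lemma skorokhod_scale (C : ℝ) (hC : 0 < C) (a₁ a₂ : ℝ)
    (f g m : ℝ → Fin 2 → ℝ) (h : IsSkorokhod (!![1, a₁; a₂, 1]) f g m) :
    IsSkorokhod (!![1, C * a₁; a₂ / C, 1])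
      (fun t => ![f t 0, f t 1 / C])
      (fun t => ![g t 0, g t 1 / C])
      (fun t => ![m t 0, m t 1 / C]) := by
  obtain ⟨hg, hm, hpos, h0, hmono, heq, hcomp⟩ := h
  have hC' : C ≠ 0 := hC.ne'
  refine ⟨?_, ?_, ?_, ?_, ?_, ?_, ?_⟩
  · rw [continuousOn_pi]
    intro i
    fin_cases i <;> simp
    · exact (continuous_apply (0:Fin 2)).comp_continuousOn hg
    · exact ((continuous_apply (1:Fin 2)).comp_continuousOn hg).div_const C
  · rw [continuousOn_pi]
    intro i
    fin_cases i <;> simp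
    · exact (continuous_apply (0:Fin 2)).comp_continuousOn hm
    · exact ((continuous_apply (1:Fin 2)).comp_continuousOn hm).div_const C
  · intro t ht j
    fin_cases j <;> simp
    · exact hpos t ht 0
    · exact div_nonneg (hpos t ht 1) hC.le
  · funext i
    fin_cases i <;> simp [h0]
  · intro j
    fin_cases j <;> simp
    · exact hmono 0
    · intro s hs t ht hst
      exact div_le_div_of_nonneg_right (hmono 1 hs ht hst) hC.le
  · intro t ht
    have := congrFun (heq t ht)
    have h0' := this 0
    have h1' := this 1
    simp [Matrix.mulVec, dotProduct, Fin.sum_univ_two] at h0' h1'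
    funext i
    fin_cases i <;>
      simp [Matrix.mulVec, dotProduct, Fin.sum_univ_two]
    · rw [h0']; field_simp
    · rw [h1']; field_simp
  · intro j s t hs hst hpos'
    fin_cases j <;> simp at hpos' ⊢
    · exact hcomp 0 s t hs hst (fun r hr => hpos' r hr.1 hr.2)
    · have key : ∀ r ∈ Set.Icc s t, 0 < g r 1 := by
        intro r hr
        rcases div_pos_iff.mp (hpos' r hr.1 hr.2) with ⟨h', _⟩ | ⟨_, h'⟩
        · exact h'
        · linarith
      rw [hcomp 1 s t hs hst key]

lemma cont_scaled (C : ℝ) (f : ℝ → Fin 2 → ℝ) (hf : ContinuousOn f (Set.Ici 0)) :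
    ContinuousOn (fun t => ![f t 0, f t 1 / C]) (Set.Ici 0) := by
  rw [continuousOn_pi]
  intro i
  fin_cases i <;> simp
  · exact (continuous_apply (0:Fin 2)).comp_continuousOn hf
  · exact ((continuous_apply (1:Fin 2)).comp_continuousOn hf).div_const C

lemma eq_of_scaled_eq (C : ℝ) (hC : C ≠ 0) (v w : Fin 2 → ℝ)
    (h : ![v 0, v 1 / C] = ![w 0, w 1 / C]) : v = w := by
  funext i
  have h0 := congrFun h 0
  have h1 := congrFun h 1
  simp at h0 h1
  fin_cases i
  · exact h0
  · field_simp at h1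
    exact h1

lemma unique_of_scale (C : ℝ) (hC : 0 < C) (b₁ b₂ : ℝ)
    (h : SkorokhodUnique (!![1, C * b₁; b₂ / C, 1])) :
    SkorokhodUnique (!![1, b₁; b₂, 1]) := by
  intro f hf hf0 g m g' m' hgm hgm'
  have s1 := skorokhod_scale C hC b₁ b₂ f g m hgm
  have s2 := skorokhod_scale C hC b₁ b₂ f g' m' hgm'
  have hf0' : ∀ j, 0 ≤ (fun t => ![f t 0, f t 1 / C]) 0 j := by
    intro j
    fin_cases j <;> simp
    · exact hf0 0
    · exact div_nonneg (hf0 1) hC.le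
  have := h _ (cont_scaled C f hf) hf0' _ _ _ _ s1 s2
  intro t ht
  obtain ⟨hg, hm⟩ := this t ht
  exact ⟨eq_of_scaled_eq C hC.ne' _ _ hg, eq_of_scaled_eq C hC.ne' _ _ hm⟩

theorem skorokhod_scaling (C : ℝ) (hC : 0 < C) (a₁ a₂ : ℝ) :
    (∀ f g m : ℝ → Fin 2 → ℝ,
        IsSkorokhod (!![1, a₁; a₂, 1]) f g m →
        IsSkorokhod (!![1, C * a₁; a₂ / C, 1])
          (fun t => ![f t 0, f t 1 / C])
          (fun t => ![g t 0, g t 1 / C])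
          (fun t => ![m t 0, m t 1 / C]))
    ∧ (SkorokhodUnique (!![1, a₁; a₂, 1]) ↔ SkorokhodUnique (!![1, C * a₁; a₂ / C, 1])) := by
  refine ⟨fun f g m h => skorokhod_scale C hC a₁ a₂ f g m h, ?_, fun h => unique_of_scale C hC a₁ a₂ h⟩
  intro hR
  have hC' : (0:ℝ) < 1 / C := by positivity
  have key := unique_of_scale (1 / C) hC' (C * a₁) (a₂ / C)
  have hmat : (!![1, 1 / C * (C * a₁); a₂ / C / (1 / C), 1]) = (!![1, a₁; a₂, 1]) := by
    congr 1 <;> field_simp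
  rw [hmat] at key
  exact key hR
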